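/- Let f ∈ 𝔽₂[x₀,x₁,x₃,x₄]. Then f is invariant, i.e. ψ(f) equals the image of f in E, if and only if f lies in the 𝔽₂-subalgebra of 𝔽₂[x₀,x₁,x₃,x₄] generated by the five elements x₀, x₁², x₀x₄ + x₁x₃, x₃², x₄². (This computes the invariants of Sym(V) under the α₂ × α₂-action, V = 𝔽₂{x₀,x₁,x₃,x₄}.) -/

import Mathlib

open MvPolynomial

noncomputable section

/-- `P = 𝔽₂[x₀, x₁, x₃, x₄]`, with variables indexed `0 ↦ x₀, 1 ↦ x₁, 2 ↦ x₃, 3 ↦ x₄`. -/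
abbrev P : Type := MvPolynomial (Fin 4) (ZMod 2)

/-- `P[s, t]`, with `0 ↦ s` and `1 ↦ t`. -/
abbrev PE : Type := MvPolynomial (Fin 2) P

/-- The ideal `(s², t²)` of `P[s, t]`. -/
def Eid : Ideal PE := Ideal.span ({X 0 ^ 2, X 1 ^ 2} : Set PE)

/-- `E = 𝔽₂[x₀, x₁, x₃, x₄][s, t]/(s², t²)`. -/
abbrev E : Type := PE ⧸ Eid

def sE : E := Ideal.Quotient.mk Eid (X 0)
def tE : E := Ideal.Quotient.mk Eid (X 1)

/-- The canonical map `𝔽₂[x₀, x₁, x₃, x₄] → E`. -/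
def ι : P →+* E := (Ideal.Quotient.mk Eid).comp (C : P →+* PE)

def x0 : P := X 0
def x1 : P := X 1
def x3 : P := X 2
def x4 : P := X 3

/-- The coaction of `O(α₂ × α₂) = 𝔽₂[s, t]/(s², t²)` on `Sym(V)`, `V = 𝔽₂{x₀, x₁, x₃, x₄}`. -/
def ψ : P →+* E :=
  (aeval ![ι x0,
           ι x1 + ι x0 * sE,
           ι x3 + ι x0 * tE,
           ι x4 + ι x3 * sE + ι x1 * tE + ι x0 * sE * tE] : P →ₐ[ZMod 2] E).toRingHom

/-!
Write `ψ f = f + s·Ds f + t·Dt f + st·(…)` with the derivations `Ds = x₀∂₁ + x₃∂₄` and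
`Dt = x₀∂₃ + x₁∂₄`; specialising `(s, t) ↦ (aε, bε)` in the dual numbers `P[ε]` shows that an
invariant `f` satisfies `Ds f = Dt f = 0`. Then `x₀∂₁f = x₃∂₄f` and `x₀∂₃f = x₁∂₄f`, so the prime
`x₀` divides `∂₄f = x₀h`, and the gradient of `f` in `x₁, x₃, x₄` is `h` times that of
`q = x₀x₄ + x₁x₃`. In characteristic 2 every `∂ᵢ∂ᵢ` vanishes, which forces `∂ᵢh = 0`, hence also
`∂ᵢ(f - hq) = 0`, for these three variables; a polynomial killed by `∂ᵢ` is a polynomial in `xᵢ²`,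
so `h` and `f - hq` lie in `𝔽₂[x₀, x₁², x₃², x₄²]`, and `f = (f - hq) + hq`. Conversely, the five
generators are invariant because `s² = t² = 2 = 0` in `E`.
-/

open TrivSqZeroExt

namespace MvPolynomial

theorem mem_of_forall_X_pow_mem {σ R : Type*} [CommSemiring R]
    {A : Subalgebra R (MvPolynomial σ R)} {f : MvPolynomial σ R}
    (h : ∀ d ∈ f.support, ∀ i, X i ^ d i ∈ A) : f ∈ A := by
  rw [f.as_sum]
  refine Subalgebra.sum_mem _ fun d hd => ?_
  rw [monomial_eq]
  exact mul_mem (A.algebraMap_mem _) (Subalgebra.prod_mem _ fun i _ => h d hd i)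

theorem aeval_inl_add_inr {σ R : Type*} [CommRing R]
    (D : Derivation R (MvPolynomial σ R) (MvPolynomial σ R)) (f : MvPolynomial σ R) :
    aeval (fun i => inl (X i) + inr (D (X i)) : σ → DualNumber (MvPolynomial σ R)) f =
      inl f + inr (D f) := by
  induction f using MvPolynomial.induction_on with
  | C a => rw [aeval_C, ← algebraMap_eq, D.map_algebraMap, inr_zero, add_zero]; rfl
  | add p q hp hq => simp only [map_add, hp, hq, inl_add, inr_add]; abel
  | mul_X p i hp =>
    rw [map_mul, hp, aeval_X]
    refine TrivSqZeroExt.ext ?_ ?_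
    · simp only [fst_mul, fst_add, fst_inl, fst_inr, add_zero]
    · simp only [snd_mul, snd_add, fst_add, fst_inl, fst_inr, snd_inl, snd_inr,
        Derivation.leibniz, smul_eq_mul, MulOpposite.smul_eq_mul_unop, MulOpposite.unop_op,
        zero_add]
      ring

section CharTwo

variable {σ R : Type*} [CommRing R] [CharP R 2]

theorem pderiv_pderiv_self (i : σ) (f : MvPolynomial σ R) : pderiv i (pderiv i f) = 0 := by
  ext m
  have hcast : ((m i + 1 + 1 : ℕ) : R) * ((m i + 1 : ℕ) : R) = 0 := by
    rw [← Nat.cast_mul, CharP.cast_eq_zero_iff R 2, mul_comm]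
    exact (Nat.even_mul_succ_self (m i + 1)).two_dvd
  rw [coeff_pderiv, coeff_pderiv, coeff_zero, Finsupp.add_apply, Finsupp.single_eq_same,
    mul_assoc]
  push_cast at hcast ⊢
  rw [hcast, mul_zero]

theorem even_of_pderiv_eq_zero {i : σ} {f : MvPolynomial σ R} (hf : pderiv i f = 0)
    {d : σ →₀ ℕ} (hd : d ∈ f.support) : Even (d i) := by
  by_contra hodd
  obtain ⟨k, hk⟩ := Nat.not_even_iff_odd.1 hodd
  set e := d - Finsupp.single i 1
  have hed : e + Finsupp.single i 1 = d := by
    ext j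
    rcases eq_or_ne j i with rfl | hj
    · simp [e]; omega
    · simp [e, Finsupp.single_eq_of_ne hj]
  have hei : ((e i : ℕ) : R) = 0 := by
    rw [CharP.cast_eq_zero_iff R 2]
    simp [e]; omega
  have hcoeff := coeff_pderiv (i := i) f e
  rw [hf, coeff_zero, hed, hei, zero_add, mul_one] at hcoeff
  exact mem_support_iff.1 hd hcoeff.symm

theorem mem_of_pderiv_eq_zero {A : Subalgebra R (MvPolynomial σ R)} {f : MvPolynomial σ R}
    (hsq : ∀ i, X i ^ 2 ∈ A) (hf : ∀ i, X i ∈ A ∨ pderiv i f = 0) : f ∈ A := by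
  refine mem_of_forall_X_pow_mem fun d hd i =>
    (hf i).elim (fun hi => pow_mem hi _) fun hi => ?_
  obtain ⟨k, hk⟩ := even_of_pderiv_eq_zero hi hd
  rw [hk, ← two_mul, pow_mul]
  exact pow_mem (hsq i) k

theorem pderiv_eq_zero_of_pderiv_eq_mul_X [IsDomain R] {i j : σ} (hji : j ≠ i)
    {f g : MvPolynomial σ R} (hf : pderiv i f = g * X j) : pderiv i g = 0 := by
  have h := pderiv_pderiv_self i f
  rw [hf, pderiv_mul, pderiv_X_of_ne hji, mul_zero, add_zero] at h
  exact (mul_eq_zero.1 h).resolve_right (X_ne_zero j)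

end CharTwo

end MvPolynomial

local notation "𝒜" =>
  Algebra.adjoin (ZMod 2) ({x0, x1 ^ 2, x0 * x4 + x1 * x3, x3 ^ 2, x4 ^ 2} : Set P)

theorem x0_mem_adjoin : x0 ∈ 𝒜 := Algebra.subset_adjoin (by simp)

theorem quadric_mem_adjoin : x0 * x4 + x1 * x3 ∈ 𝒜 := Algebra.subset_adjoin (by simp)

theorem X_sq_mem_adjoin (i : Fin 4) : (X i : P) ^ 2 ∈ 𝒜 := by
  fin_cases i
  · exact pow_mem x0_mem_adjoin 2
  all_goals exact Algebra.subset_adjoin (by simp [x1, x3, x4])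

theorem mem_adjoin_of_pderiv_eq_zero {g : P} (h₁ : pderiv 1 g = 0) (h₂ : pderiv 2 g = 0)
    (h₃ : pderiv 3 g = 0) : g ∈ 𝒜 := by
  refine MvPolynomial.mem_of_pderiv_eq_zero X_sq_mem_adjoin fun i => ?_
  fin_cases i
  exacts [.inl x0_mem_adjoin, .inr h₁, .inr h₂, .inr h₃]

def Ds : Derivation (ZMod 2) P P := (X 0 : P) • pderiv 1 + (X 2 : P) • pderiv 3

def Dt : Derivation (ZMod 2) P P := (X 0 : P) • pderiv 2 + (X 1 : P) • pderiv 3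

theorem mem_adjoin_of_Ds_eq_zero_of_Dt_eq_zero {f : P} (hs : Ds f = 0) (ht : Dt f = 0) :
    f ∈ 𝒜 := by
  simp only [Ds, Dt, Derivation.add_apply, Derivation.smul_apply, smul_eq_mul] at hs ht
  have two : (2 : P) = 0 := CharTwo.two_eq_zero
  obtain ⟨h, h3⟩ : X 0 ∣ pderiv 3 f := by
    refine ((X_prime (σ := Fin 4) (R := ZMod 2)).dvd_or_dvd (a := X 1)
      ⟨-pderiv 2 f, by linear_combination ht⟩).resolve_left ?_
    rw [X_dvd_X]
    decide
  have h1 : pderiv 1 f = h * X 2 := by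
    refine mul_left_cancel₀ (X_ne_zero (0 : Fin 4)) ?_
    linear_combination hs - X 2 * h3 - (X 0 * X 2 * h) * two
  have h2 : pderiv 2 f = h * X 1 := by
    refine mul_left_cancel₀ (X_ne_zero (0 : Fin 4)) ?_
    linear_combination ht - X 1 * h3 - (X 0 * X 1 * h) * two
  replace h3 : pderiv 3 f = h * X 0 := h3.trans (mul_comm _ _)
  have hh1 := pderiv_eq_zero_of_pderiv_eq_mul_X (by decide) h1
  have hh2 := pderiv_eq_zero_of_pderiv_eq_mul_X (by decide) h2
  have hh3 := pderiv_eq_zero_of_pderiv_eq_mul_X (by decide) h3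
  have hg : f - h * (x0 * x4 + x1 * x3) ∈ 𝒜 := by
    apply mem_adjoin_of_pderiv_eq_zero <;>
      simp [h1, h2, h3, hh1, hh2, hh3, pderiv_X, x0, x1, x3, x4]
  simpa using add_mem hg (mul_mem (mem_adjoin_of_pderiv_eq_zero hh1 hh2 hh3) quadric_mem_adjoin)

def evalSqZero (a b : P) : E →ₐ[P] DualNumber P :=
  Ideal.Quotient.liftₐ Eid (aeval ![inr a, inr b]) fun _ hx => RingHom.mem_ker.1 <|
    Ideal.span_le (I := RingHom.ker (aeval ![inr a, inr b] : PE →ₐ[P] DualNumber P)).2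
      (by rintro _ (rfl | rfl) <;> simp [sq]) hx

theorem evalSqZero_ι (a b f : P) : evalSqZero a b (ι f) = inl f :=
  (evalSqZero a b).commutes f

theorem evalSqZero_sE (a b : P) : evalSqZero a b sE = inr a :=
  aeval_X (R := P) ![inr a, inr b] 0

theorem evalSqZero_tE (a b : P) : evalSqZero a b tE = inr b :=
  aeval_X (R := P) ![inr a, inr b] 1

theorem evalSqZero_ψ (a b f : P) :
    evalSqZero a b (ψ f) = inl f + inr ((a • Ds + b • Dt) f) := by
  rw [← MvPolynomial.aeval_inl_add_inr]
  refine (comp_aeval_apply (S₁ := E) (B := DualNumber P) _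
    ((evalSqZero a b).restrictScalars (ZMod 2)) f).trans (congrArg (aeval · f) (funext fun i => ?_))
  fin_cases i <;> refine TrivSqZeroExt.ext ?_ ?_ <;>
    simp [evalSqZero_ι, evalSqZero_sE, evalSqZero_tE, Ds, Dt, x0, x1, x3, x4, pderiv_X]

theorem Ds_eq_zero_and_Dt_eq_zero_of_invariant {f : P} (h : ψ f = ι f) :
    Ds f = 0 ∧ Dt f = 0 := by
  have key (a b : P) : a * Ds f + b * Dt f = 0 := by
    simpa [evalSqZero_ψ, evalSqZero_ι] using congrArg (fun e => snd (evalSqZero a b e)) h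
  simpa using And.intro (key 1 0) (key 0 1)

theorem sE_sq : sE ^ 2 = 0 := Ideal.Quotient.eq_zero_iff_mem.2 (Ideal.subset_span (by simp))

theorem tE_sq : tE ^ 2 = 0 := Ideal.Quotient.eq_zero_iff_mem.2 (Ideal.subset_span (by simp))

theorem two_eq_zero_E : (2 : E) = 0 := by
  rw [← map_ofNat (algebraMap (ZMod 2) E) 2, show (2 : ZMod 2) = 0 from rfl, map_zero]

theorem ψ_X (i : Fin 4) : ψ (X i) = ![ι x0, ι x1 + ι x0 * sE, ι x3 + ι x0 * tE,
    ι x4 + ι x3 * sE + ι x1 * tE + ι x0 * sE * tE] i :=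
  aeval_X _ i

theorem invariant_of_mem_adjoin {f : P} (hf : f ∈ 𝒜) : ψ f = ι f := by
  have hs := sE_sq
  have ht := tE_sq
  have h2 := two_eq_zero_E
  induction hf using Algebra.adjoin_induction with
  | mem g hg =>
    simp only [Set.mem_insert_iff, Set.mem_singleton_iff] at hg
    rcases hg with rfl | rfl | rfl | rfl | rfl <;> simp [x0, x1, x3, x4, ψ_X] <;> grind
  | algebraMap r =>
    exact RingHom.congr_fun
      (Subsingleton.elim (ψ.comp (algebraMap _ _)) (ι.comp (algebraMap _ _))) r
  | add _ _ _ _ hx hy => rw [map_add, map_add, hx, hy]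
  | mul _ _ _ _ hx hy => rw [map_mul, map_mul, hx, hy]

/-- A polynomial `f ∈ 𝔽₂[x₀, x₁, x₃, x₄]` is invariant under the `α₂ × α₂`-coaction if and
only if it lies in the `𝔽₂`-subalgebra generated by `x₀, x₁², x₀x₄ + x₁x₃, x₃², x₄²`. -/
theorem invariant_iff_mem_adjoin (f : P) :
    ψ f = ι f ↔
      f ∈ Algebra.adjoin (ZMod 2)
        ({x0, x1 ^ 2, x0 * x4 + x1 * x3, x3 ^ 2, x4 ^ 2} : Set P) := by
  refine ⟨fun h => ?_, invariant_of_mem_adjoin⟩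
  obtain ⟨hs, ht⟩ := Ds_eq_zero_and_Dt_eq_zero_of_invariant h
  exact mem_adjoin_of_Ds_eq_zero_of_Dt_eq_zero hs ht
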